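/- Let s ≥ 2, t ≥ 1, k, n be integers and let a = t + sp + r with 0 ≤ r, integers p ≥ 0. Then max over all valid a of ∑_{i ≥ t+(s−1)p+r} C(a,i)·C(n−a,k−i) is attained at some a with s | (a − t), i.e., at some a of the form t + sp (r = 0). -/

import Mathlib

/-!
Let `f a` be the sum at `a` and `L a = t + (s - 1) p + r` its lower limit. When `s ∤ a - t`,
`L (a - 1) = L a - 1`, and then `f a ≤ f (a - 1)`: among the `k`-subsets of an `n`-set, those
with at least `L` elements in a fixed `a`-subset also have at least `L - 1` elements in a fixed
`(a - 1)`-subset of it (algebraically, Pascal's rule on either factor). Stepping down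
`r = (a - t) % s` times from a maximiser therefore reaches a maximiser with `s ∣ a - t`.
-/

open Finset

lemma sum_Icc_add_one_add_one {M : Type*} [AddCommMonoid M] (f : ℕ → M) (a b : ℕ) :
    ∑ i ∈ Icc (a + 1) (b + 1), f i = ∑ i ∈ Icc a b, f (i + 1) := by
  rw [← map_add_right_Icc a b 1, sum_map]
  rfl

def vandermondeTail (a c m k : ℕ) : ℕ :=
  ∑ i ∈ Icc m k, a.choose i * c.choose (k - i)

namespace vandermondeTail

lemma antitone_lower (a c m k : ℕ) : vandermondeTail a c (m + 1) k ≤ vandermondeTail a c m k :=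
  sum_le_sum_of_subset (Icc_subset_Icc_left m.le_succ)

lemma zero_of_lt {a c m k : ℕ} (h : k < m) : vandermondeTail a c m k = 0 := by
  rw [vandermondeTail, Icc_eq_empty_of_lt h, sum_empty]

lemma succ_left (b c m k : ℕ) :
    vandermondeTail (b + 1) c (m + 1) (k + 1) =
      vandermondeTail b c m k + vandermondeTail b c (m + 1) (k + 1) := by
  simp only [vandermondeTail, sum_Icc_add_one_add_one, Nat.choose_succ_succ, add_mul,
    sum_add_distrib, Nat.add_sub_add_right]

lemma succ_right (b c m k : ℕ) :
    vandermondeTail b (c + 1) m (k + 1) =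
      vandermondeTail b c m k + vandermondeTail b c m (k + 1) := by
  rcases lt_or_ge (k + 1) m with h | h
  · rw [zero_of_lt h, zero_of_lt h, zero_of_lt (by omega)]
  simp only [vandermondeTail, sum_Icc_succ_top h, Nat.sub_self, Nat.choose_zero_right]
  have pascal : ∀ i ∈ Icc m k, b.choose i * (c + 1).choose (k + 1 - i) =
      b.choose i * c.choose (k - i) + b.choose i * c.choose (k + 1 - i) := by
    intro i hi
    rw [Nat.sub_add_comm (mem_Icc.1 hi).2, Nat.choose_succ_succ, mul_add]
  rw [sum_congr rfl pascal, sum_add_distrib, add_assoc]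

lemma succ_left_le_succ_right (b c m k : ℕ) :
    vandermondeTail (b + 1) c (m + 1) k ≤ vandermondeTail b (c + 1) m k := by
  cases k with
  | zero => simp [zero_of_lt]
  | succ k =>
    rw [succ_left, succ_right]
    exact Nat.add_le_add_left (antitone_lower b c m (k + 1)) _

end vandermondeTail

lemma Nat.sub_one_div_and_mod {s x : ℕ} (h : x % s ≠ 0) :
    (x - 1) / s = x / s ∧ (x - 1) % s = x % s - 1 := by
  rcases Nat.eq_zero_or_pos s with rfl | hs
  · simp
  have hx : x - 1 = x % s - 1 + s * (x / s) := by have := Nat.div_add_mod x s; omega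
  have hlt : x % s - 1 < s := by have := Nat.mod_lt x hs; omega
  rw [hx, Nat.add_mul_div_left _ _ hs, Nat.div_eq_of_lt hlt, Nat.add_mul_mod_self_left,
    Nat.mod_eq_of_lt hlt]
  exact ⟨zero_add _, rfl⟩

def threshold (s t a : ℕ) : ℕ := t + (s - 1) * ((a - t) / s) + (a - t) % s

lemma threshold_eq_threshold_sub_one_add_one {s t a : ℕ} (h : (a - t) % s ≠ 0) :
    threshold s t a = threshold s t (a - 1) + 1 := by
  obtain ⟨hdiv, hmod⟩ := Nat.sub_one_div_and_mod h
  rw [threshold, threshold, Nat.sub_right_comm, hdiv, hmod]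
  omega

variable {s t n k : ℕ}

lemma vandermondeTail_threshold_le_sub_one {a : ℕ} (ha : a ≤ n) (h : (a - t) % s ≠ 0) :
    vandermondeTail a (n - a) (threshold s t a) k ≤
      vandermondeTail (a - 1) (n - (a - 1)) (threshold s t (a - 1)) k := by
  have hat : a - t ≠ 0 := fun h0 => h (by rw [h0, Nat.zero_mod])
  obtain ⟨b, rfl⟩ : ∃ b, a = b + 1 := Nat.exists_eq_add_one.2 (by omega)
  rw [threshold_eq_threshold_sub_one_add_one h, Nat.add_sub_cancel,
    show n - b = n - (b + 1) + 1 by omega]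
  exact vandermondeTail.succ_left_le_succ_right _ _ _ _

lemma vandermondeTail_threshold_le_sub_mod :
    ∀ r a, a ≤ n → (a - t) % s = r →
      vandermondeTail a (n - a) (threshold s t a) k ≤
        vandermondeTail (a - r) (n - (a - r)) (threshold s t (a - r)) k
  | 0, _, _, _ => le_rfl
  | r + 1, a, ha, hr => by
    have hr' : (a - 1 - t) % s = r := by
      rw [Nat.sub_right_comm, (Nat.sub_one_div_and_mod (s := s) (by omega)).2, hr,
        Nat.add_sub_cancel]
    calc _ ≤ _ := vandermondeTail_threshold_le_sub_one ha (by omega)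
      _ ≤ _ := vandermondeTail_threshold_le_sub_mod r (a - 1) (by omega) hr'
      _ = _ := by rw [Nat.sub_sub, Nat.add_comm]

theorem stmt_11_general (s n k t : ℕ) (htn : t ≤ n) :
    ∃ a ∈ Finset.Icc t n, s ∣ (a - t) ∧
      ∀ a' ∈ Finset.Icc t n,
        (∑ i ∈ Finset.Icc (t + (s - 1) * ((a' - t) / s) + (a' - t) % s) k,
            a'.choose i * (n - a').choose (k - i)) ≤
          ∑ i ∈ Finset.Icc (t + (s - 1) * ((a - t) / s) + (a - t) % s) k,
            a.choose i * (n - a).choose (k - i) := by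
  obtain ⟨b, hb, hmax⟩ := exists_max_image (Icc t n)
    (fun a => vandermondeTail a (n - a) (threshold s t a) k) ⟨t, mem_Icc.2 ⟨le_rfl, htn⟩⟩
  obtain ⟨hbt, hbn⟩ := mem_Icc.1 hb
  have hmod : (b - t) % s ≤ b - t := Nat.mod_le _ _
  refine ⟨b - (b - t) % s, mem_Icc.2 ⟨by omega, by omega⟩, ?_, fun a' ha' => ?_⟩
  · rw [Nat.sub_right_comm]
    exact Nat.dvd_sub_mod _
  · exact (hmax a' ha').trans (vandermondeTail_threshold_le_sub_mod _ b hbn rfl)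

/-- Writing `a = t + sp + r` with `p = (a−t)/s`, `r = (a−t) % s`, the maximum of
`∑_{i ≥ t+(s−1)p+r} C(a,i)C(n−a,k−i)` over `t ≤ a ≤ n` is attained at some `a`
with `s ∣ (a − t)`. -/
theorem stmt_11 (s n k t : ℕ) (hs : 2 ≤ s) (ht : 1 ≤ t) (htn : t ≤ n) :
    ∃ a ∈ Finset.Icc t n, s ∣ (a - t) ∧
      ∀ a' ∈ Finset.Icc t n,
        (∑ i ∈ Finset.Icc (t + (s - 1) * ((a' - t) / s) + (a' - t) % s) k,
            a'.choose i * (n - a').choose (k - i)) ≤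
          ∑ i ∈ Finset.Icc (t + (s - 1) * ((a - t) / s) + (a - t) % s) k,
            a.choose i * (n - a).choose (k - i) :=
  stmt_11_general s n k t htn
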